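/- arXiv:2505.00847 — 3 statements merged into one kernel-verified Lean document; each statement's English description precedes it below -/
import Mathlib

section
/- Let N ∈ ℕ, let n̄ ≥ 1 be the maximum platoon size, and let J : ℕ → ℕ → ℝ, where J i n denotes the utility of the platoon consisting of trucks i − n + 1, …, i. Define V : ℕ → ℝ by V 0 = 0 and, for i ≥ 1, V i = max over n with 1 ≤ n ≤ min(i, n̄) of (V (i − n) + J i n). Call a list (n₁, …, n_k) of positive integers with each n_j ≤ n̄ and n₁ + ⋯ + n_k = N a feasible composition, and define its total utility as Σ_{j=1}^{k} J(n₁ + ⋯ + n_j) n_j. Then for every feasible composition of N, its total utility is at most V N. -/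
/-- The dynamic program `V 0 = 0`,
`V i = max_{1 ≤ n ≤ min i n̄} (V (i − n) + J i n)` for `i ≥ 1`
(note `(i + 1) - n = i - (n - 1)` for `n ≥ 1`). -/
noncomputable def dpValue (nbar : ℕ) (hn : 1 ≤ nbar) (J : ℕ → ℕ → ℝ) : ℕ → ℝ
  | 0 => 0
  | (i + 1) =>
      (Finset.Icc 1 (min (i + 1) nbar)).sup'
        (Finset.nonempty_Icc.mpr (by omega))
        (fun n => dpValue nbar hn J (i - (n - 1)) + J (i + 1) n)
  termination_by i => i
  decreasing_by omega

lemma dpValue_step (nbar : ℕ) (hn : 1 ≤ nbar) (J : ℕ → ℕ → ℝ) (M a : ℕ)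
    (ha1 : 1 ≤ a) (ha2 : a ≤ nbar) :
    dpValue nbar hn J M + J (M + a) a ≤ dpValue nbar hn J (M + a) := by
  have h : M + a = (M + a - 1) + 1 := by omega
  rw [h, dpValue]
  have hmem : a ∈ Finset.Icc 1 (min (M + a - 1 + 1) nbar) := by
    simp only [Finset.mem_Icc]; omega
  have := Finset.le_sup' (fun n => dpValue nbar hn J ((M + a - 1) - (n - 1)) + J (M + a - 1 + 1) n) hmem
  have heq : (M + a - 1) - (a - 1) = M := by omega
  rw [heq] at this
  exact this

lemma total_sum (J : ℕ → ℕ → ℝ) (L : List ℕ) :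
    (∑ j : Fin L.length, J ((L.take (j.val + 1)).sum) (L.get j))
      = ∑ j ∈ Finset.range L.length, J ((L.take (j + 1)).sum) (L.getD j 0) := by
  rw [show (∑ j : Fin L.length, J ((L.take (j.val + 1)).sum) (L.get j))
      = ∑ j : Fin L.length, J ((L.take (j.val + 1)).sum) (L.getD j.val 0) from
    Finset.sum_congr rfl (fun j _ => by
      congr 1
      exact (List.getD_eq_getElem L 0 j.isLt).symm)]
  exact Fin.sum_univ_eq_sum_range (fun j => J ((L.take (j + 1)).sum) (L.getD j 0)) L.length

/-- Any feasible composition of `N` (a list of positive parts each at most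
`n̄`, summing to `N`) has total utility `∑_j J (n₁+⋯+n_j) n_j` at most `V N`. -/
theorem dp_upper_bounds_compositions (N nbar : ℕ) (hn : 1 ≤ nbar)
    (J : ℕ → ℕ → ℝ) (L : List ℕ)
    (hpos : ∀ n ∈ L, 1 ≤ n) (hbd : ∀ n ∈ L, n ≤ nbar) (hsum : L.sum = N) :
    (∑ j : Fin L.length, J ((L.take (j.val + 1)).sum) (L.get j))
      ≤ dpValue nbar hn J N := by
  rw [total_sum]
  induction L using List.reverseRecOn generalizing N with
  | nil =>
    simp at hsum
    subst hsum
    simp [dpValue]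
  | append_singleton L' a ih =>
    have hsum' : L'.sum + a = N := by
      simpa using hsum
    have hlen : (L' ++ [a]).length = L'.length + 1 := by simp
    rw [hlen, Finset.sum_range_succ]
    have hlast : ((L' ++ [a]).take (L'.length + 1)).sum = N := by
      rw [List.take_of_length_le (by simp)]
      simpa using hsum
    have hgetlast : (L' ++ [a]).getD L'.length 0 = a := by
      simp
    have hrest : ∀ j ∈ Finset.range L'.length,
        J (((L' ++ [a]).take (j + 1)).sum) ((L' ++ [a]).getD j 0)
          = J ((L'.take (j + 1)).sum) (L'.getD j 0) := by
      intro j hj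
      rw [Finset.mem_range] at hj
      rw [List.take_append_of_le_length (by omega)]
      congr 1
      rw [List.getD_eq_getElem _ _ (by simp; omega), List.getD_eq_getElem _ _ hj]
      exact List.getElem_append_left (by omega)
    rw [Finset.sum_congr rfl hrest, hgetlast, hlast]
    have h1 := ih L'.sum (fun n hm => hpos n (List.mem_append_left _ hm))
      (fun n hm => hbd n (List.mem_append_left _ hm)) rfl
    have h2 := dpValue_step nbar hn J L'.sum a (hpos a (by simp)) (hbd a (by simp))
    rw [hsum'] at h2
    calc _ ≤ dpValue nbar hn J L'.sum + J N a := by linarith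
      _ ≤ _ := h2
end

section
/- Let N ∈ ℕ, let n̄ ≥ 1 be the maximum platoon size, and let J : ℕ → ℕ → ℝ, where J i n denotes the utility of the platoon consisting of trucks i − n + 1, …, i. Define V : ℕ → ℝ by V 0 = 0 and, for i ≥ 1, V i = max over n with 1 ≤ n ≤ min(i, n̄) of (V (i − n) + J i n). Then there exists a feasible composition of N (a list (n₁, …, n_k) of positive integers each at most n̄ summing to N) whose total utility Σ_{j=1}^{k} J(n₁ + ⋯ + n_j) n_j equals V N. Hence V N equals the maximum total utility over all feasible compositions. -/
lemma sum_append_single (L : List ℕ) (n : ℕ) (J : ℕ → ℕ → ℝ) :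
    (∑ j : Fin (L ++ [n]).length, J (((L ++ [n]).take (j.val + 1)).sum) ((L ++ [n]).get j))
      = (∑ j : Fin L.length, J ((L.take (j.val + 1)).sum) (L.get j)) + J (L.sum + n) n := by
  have h : L.length + 1 = (L ++ [n]).length := by simp
  rw [← Fin.sum_congr' _ h, Fin.sum_univ_castSucc]
  congr 1
  · apply Finset.sum_congr rfl
    intro j _
    simp only [Fin.coe_cast, Fin.coe_castSucc, List.get_eq_getElem, Fin.cast, Fin.castSucc,
      Fin.castAdd, Fin.castLE]
    rw [List.take_append_of_le_length (by omega), List.getElem_append_left (by omega)]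
  · simp only [List.get_eq_getElem, Fin.coe_cast, Fin.val_last]
    rw [List.take_of_length_le (by simp), List.getElem_concat_length]
    simp
    rfl

/-- The DP value `V N` is attained: there is a feasible composition of `N`
whose total utility equals `V N`. -/
theorem dp_value_attained (N nbar : ℕ) (hn : 1 ≤ nbar) (J : ℕ → ℕ → ℝ) :
    ∃ L : List ℕ, (∀ n ∈ L, 1 ≤ n ∧ n ≤ nbar) ∧ L.sum = N ∧
      (∑ j : Fin L.length, J ((L.take (j.val + 1)).sum) (L.get j))
        = dpValue nbar hn J N := by
  induction N using Nat.strong_induction_on with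
  | _ N ih =>
    match N with
    | 0 => exact ⟨[], by simp, by simp, by simp [dpValue]⟩
    | (i + 1) =>
      obtain ⟨n, hmem, hsup⟩ := Finset.exists_mem_eq_sup'
        (Finset.nonempty_Icc.mpr (by omega : (1:ℕ) ≤ min (i + 1) nbar))
        (fun n => dpValue nbar hn J (i - (n - 1)) + J (i + 1) n)
      rw [Finset.mem_Icc] at hmem
      obtain ⟨L', hL'1, hL'2, hL'3⟩ := ih (i - (n - 1)) (by omega)
      refine ⟨L' ++ [n], ?_, ?_, ?_⟩
      · intro m hm
        rcases List.mem_append.mp hm with h | h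
        · exact hL'1 m h
        · simp at h; omega
      · simp [hL'2]; omega
      · rw [sum_append_single, hL'3, hL'2]
        have hsum : i - (n - 1) + n = i + 1 := by omega
        rw [hsum, dpValue, hsup]
end

section
/- Let a : Fin N → ℝ be a monotone nondecreasing assignment of earliest departure times to N trucks. For a partition P of Fin N into nonempty parts, define its waiting cost as Σ over parts p of Σ_{j∈p} (max_{i∈p} a(i) − a(j)). Then for every partition P there exists a partition Q of Fin N into parts that are intervals of consecutive indices, with the same multiset of part cardinalities as P, whose waiting cost is less than or equal to that of P. Hence among all partitions with a given multiset of group sizes, the minimum waiting cost is attained by a partition into consecutive blocks. -/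
/-!
Order the parts of `P` by their last truck and replace the `k`-th part by the `k`-th block of
consecutive trucks of the same size. The first `k` parts are disjoint and lie weakly below the
last truck of the `k`-th part, so the `k`-th block ends no later than that truck and, `a` being
monotone, departs no later. Since the waiting cost equals `∑ p, #p * departure p - ∑ j, a j`,
it cannot increase.
-/

/-- Waiting cost of a partition: each truck in a part waits until the
maximum earliest departure time of that part (junk value `0` for the empty
part, which never occurs). -/
noncomputable def waitingCost {N : ℕ} (a : Fin N → ℝ)
    (P : Finpartition (Finset.univ : Finset (Fin N))) : ℝ :=
  ∑ p ∈ P.parts, ∑ j ∈ p,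
    ((if h : p.Nonempty then p.sup' h a else 0) - a j)

open Finset

lemma Fin.filter_le_val_lt_eq_Icc {N s e : ℕ} (hse : s < e) (he : e ≤ N) :
    ({x : Fin N | s ≤ x ∧ (x : ℕ) < e} : Finset (Fin N)) =
      Icc ⟨s, by omega⟩ ⟨e - 1, by omega⟩ := by
  ext x
  simp only [mem_filter, mem_univ, true_and, mem_Icc, Fin.le_def]
  omega

lemma Fin.card_filter_le_val_lt {N s e : ℕ} (hse : s < e) (he : e ≤ N) :
    #({x : Fin N | s ≤ x ∧ (x : ℕ) < e} : Finset (Fin N)) = e - s := by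
  rw [Fin.filter_le_val_lt_eq_Icc hse he, Fin.card_Icc, Fin.val_mk, Fin.val_mk]
  omega

lemma Finpartition.injOn_sup_parts {α β : Type*} [DecidableEq α] [LinearOrder β] [OrderBot β]
    {s : Finset α} (P : Finpartition s) {f : α → β} (hf : f.Injective) :
    Set.InjOn (fun p : Finset α => p.sup f) P.parts := by
  intro p hp q hq hpq
  obtain ⟨x, hx, hpx⟩ := exists_mem_eq_sup p (P.nonempty_of_mem_parts hp) f
  obtain ⟨y, hy, hqy⟩ := exists_mem_eq_sup q (P.nonempty_of_mem_parts hq) f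
  have hxy : x = y := hf (hpx.symm.trans (hpq.trans hqy))
  exact P.eq_of_mem_parts hp hq hx (hxy ▸ hy)

noncomputable def platoonDeparture {ι : Type*} [LinearOrder ι] (a : ι → ℝ) (p : Finset ι) : ℝ :=
  if h : p.Nonempty then p.sup' h a else 0

lemma platoonDeparture_le_of_forall_exists_le {ι : Type*} [LinearOrder ι] {a : ι → ℝ}
    (ha : Monotone a) {s t : Finset ι} (hs : s.Nonempty) (hst : ∀ x ∈ s, ∃ y ∈ t, x ≤ y) :
    platoonDeparture a s ≤ platoonDeparture a t := by
  obtain ⟨y₀, hy₀, -⟩ := hst _ hs.choose_spec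
  rw [platoonDeparture, platoonDeparture, dif_pos hs, dif_pos ⟨y₀, hy₀⟩]
  refine sup'_le _ _ fun x hx => ?_
  obtain ⟨y, hy, hxy⟩ := hst x hx
  exact (ha hxy).trans (le_sup' a hy)

lemma waitingCost_eq_sum_card_mul_sub {N : ℕ} (a : Fin N → ℝ)
    (P : Finpartition (univ : Finset (Fin N))) :
    waitingCost a P = ∑ p ∈ P.parts, #p * platoonDeparture a p - ∑ j, a j := by
  have hsum : ∑ j, a j = ∑ p ∈ P.parts, ∑ j ∈ p, a j :=
    calc ∑ j, a j = ∑ j ∈ P.parts.biUnion id, a j := by rw [P.biUnion_parts]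
      _ = ∑ p ∈ P.parts, ∑ j ∈ p, a j := sum_biUnion P.disjoint
  rw [hsum, ← sum_sub_distrib]
  refine sum_congr rfl fun p _ => ?_
  rw [sum_sub_distrib, sum_const, nsmul_eq_mul]
  rfl

namespace Finpartition

variable {N : ℕ} (P : Finpartition (univ : Finset (Fin N))) {p q : Finset (Fin N)}

/-- The parts of `P` are ordered by their last truck; the block replacing `p` starts right
after the trucks of the parts before it. -/
def blockStart (p : Finset (Fin N)) : ℕ :=
  ∑ q ∈ P.parts with q.sup Fin.val < p.sup Fin.val, #q

def block (p : Finset (Fin N)) : Finset (Fin N) :=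
  {x | P.blockStart p ≤ x ∧ (x : ℕ) < P.blockStart p + #p}

lemma blockStart_add_card (hp : p ∈ P.parts) :
    P.blockStart p + #p = ∑ q ∈ P.parts with q.sup Fin.val ≤ p.sup Fin.val, #q := by
  have hfilter : {q ∈ P.parts | q.sup Fin.val ≤ p.sup Fin.val} =
      insert p {q ∈ P.parts | q.sup Fin.val < p.sup Fin.val} := by
    ext q
    simp only [mem_filter, mem_insert]
    constructor
    · rintro ⟨hq, hle⟩
      rcases hle.lt_or_eq with hlt | heq
      · exact Or.inr ⟨hq, hlt⟩
      · exact Or.inl (P.injOn_sup_parts Fin.val_injective hq hp heq)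
    · rintro (rfl | ⟨hq, hlt⟩)
      exacts [⟨hp, le_rfl⟩, ⟨hq, hlt.le⟩]
  rw [hfilter, sum_insert fun h => (mem_filter.mp h).2.false, add_comm, blockStart]

lemma blockStart_add_card_le_sup_add_one (hp : p ∈ P.parts) :
    P.blockStart p + #p ≤ p.sup Fin.val + 1 := by
  obtain ⟨y, hy, hsup⟩ := exists_mem_eq_sup p (P.nonempty_of_mem_parts hp) Fin.val
  have hsub : {q ∈ P.parts | q.sup Fin.val ≤ p.sup Fin.val}.biUnion id ⊆ Iic y := by
    intro x hx
    obtain ⟨q, hq, hxq⟩ := mem_biUnion.mp hx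
    have hxle : (x : ℕ) ≤ q.sup Fin.val := le_sup (f := Fin.val) hxq
    rw [mem_filter] at hq
    rw [mem_Iic, Fin.le_def]
    omega
  calc P.blockStart p + #p = #({q ∈ P.parts | q.sup Fin.val ≤ p.sup Fin.val}.biUnion id) := by
        rw [P.blockStart_add_card hp, card_biUnion (P.disjoint.subset (filter_subset _ _))]
        rfl
    _ ≤ #(Iic y) := card_le_card hsub
    _ = p.sup Fin.val + 1 := by rw [Fin.card_Iic, hsup]

lemma blockStart_add_card_le (hp : p ∈ P.parts) : P.blockStart p + #p ≤ N := by
  obtain ⟨y, -, hsup⟩ := exists_mem_eq_sup p (P.nonempty_of_mem_parts hp) Fin.val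
  have := P.blockStart_add_card_le_sup_add_one hp
  omega

lemma blockStart_add_card_le_blockStart (hp : p ∈ P.parts)
    (hpq : p.sup Fin.val < q.sup Fin.val) : P.blockStart p + #p ≤ P.blockStart q := by
  rw [P.blockStart_add_card hp]
  exact sum_le_sum_of_subset (monotone_filter_right _ fun r _ hr => hr.trans_lt hpq)

lemma blockStart_lt_blockStart_add_card (hp : p ∈ P.parts) :
    P.blockStart p < P.blockStart p + #p :=
  Nat.lt_add_of_pos_right (card_pos.mpr (P.nonempty_of_mem_parts hp))

lemma exists_block_eq_Icc (hp : p ∈ P.parts) : ∃ l u : Fin N, P.block p = Icc l u :=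
  ⟨_, _, Fin.filter_le_val_lt_eq_Icc (P.blockStart_lt_blockStart_add_card hp)
    (P.blockStart_add_card_le hp)⟩

lemma card_block (hp : p ∈ P.parts) : #(P.block p) = #p := by
  rw [block, Fin.card_filter_le_val_lt (P.blockStart_lt_blockStart_add_card hp)
    (P.blockStart_add_card_le hp)]
  omega

lemma block_nonempty (hp : p ∈ P.parts) : (P.block p).Nonempty := by
  rw [← card_pos, P.card_block hp, card_pos]
  exact P.nonempty_of_mem_parts hp

lemma exists_le_of_mem_block (hp : p ∈ P.parts) {x : Fin N} (hx : x ∈ P.block p) :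
    ∃ y ∈ p, x ≤ y := by
  obtain ⟨y, hy, hsup⟩ := exists_mem_eq_sup p (P.nonempty_of_mem_parts hp) Fin.val
  refine ⟨y, hy, ?_⟩
  have := P.blockStart_add_card_le_sup_add_one hp
  simp only [block, mem_filter, mem_univ, true_and] at hx
  rw [Fin.le_def]
  omega

lemma disjoint_block (hp : p ∈ P.parts) (hq : q ∈ P.parts) (hpq : p ≠ q) :
    Disjoint (P.block p) (P.block q) := by
  wlog hlt : p.sup Fin.val < q.sup Fin.val generalizing p q
  · have hne : q.sup Fin.val ≠ p.sup Fin.val :=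
      fun h => hpq (P.injOn_sup_parts Fin.val_injective hq hp h).symm
    exact (this hq hp hpq.symm (lt_of_le_of_ne (not_lt.mp hlt) hne)).symm
  have := P.blockStart_add_card_le_blockStart hp hlt
  rw [disjoint_left]
  intro x hxp hxq
  simp only [block, mem_filter, mem_univ, true_and] at hxp hxq
  omega

lemma injOn_block : Set.InjOn P.block P.parts := by
  intro p hp q hq hpq
  by_contra hne
  have hdisj := P.disjoint_block hp hq hne
  rw [hpq, disjoint_self] at hdisj
  exact (P.block_nonempty hq).ne_empty hdisj

def consecutiveBlocks : Finpartition (univ : Finset (Fin N)) where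
  parts := P.parts.image P.block
  supIndep := by
    rw [supIndep_iff_pairwiseDisjoint, coe_image]
    rintro _ ⟨p, hp, rfl⟩ _ ⟨q, hq, rfl⟩ hpq
    exact P.disjoint_block hp hq fun h => hpq (h ▸ rfl)
  sup_parts := by
    rw [sup_image, Function.id_comp, sup_eq_biUnion]
    refine eq_univ_of_card _ ?_
    rw [card_biUnion fun p hp q hq hpq => P.disjoint_block hp hq hpq,
      sum_congr rfl fun p hp => P.card_block hp, P.sum_card_parts, card_univ]
  bot_notMem h := by
    obtain ⟨p, hp, hbot⟩ := mem_image.mp h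
    exact (P.block_nonempty hp).ne_empty hbot

lemma consecutiveBlocks_parts : P.consecutiveBlocks.parts = P.parts.image P.block := rfl

lemma map_card_consecutiveBlocks_parts :
    P.consecutiveBlocks.parts.val.map card = P.parts.val.map card := by
  rw [consecutiveBlocks_parts, image_val_of_injOn P.injOn_block, Multiset.map_map]
  exact Multiset.map_congr rfl fun p hp => P.card_block hp

lemma waitingCost_consecutiveBlocks_le {a : Fin N → ℝ} (ha : Monotone a) :
    waitingCost a P.consecutiveBlocks ≤ waitingCost a P := by
  rw [waitingCost_eq_sum_card_mul_sub, waitingCost_eq_sum_card_mul_sub, consecutiveBlocks_parts,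
    sum_image P.injOn_block]
  refine sub_le_sub_right (sum_le_sum fun p hp => ?_) _
  rw [P.card_block hp]
  exact mul_le_mul_of_nonneg_left (platoonDeparture_le_of_forall_exists_le ha
    (P.block_nonempty hp) fun x hx => P.exists_le_of_mem_block hp hx) (Nat.cast_nonneg _)

end Finpartition

/-- If trucks are sorted by earliest departure times (`a` monotone), then for
every partition there is a partition into intervals of consecutive indices
with the same multiset of part sizes and waiting cost no larger; hence
consecutive-block platoons minimize waiting cost among all partitions with a
given multiset of group sizes. -/
theorem consecutive_blocks_minimize_waiting {N : ℕ} (a : Fin N → ℝ)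
    (ha : Monotone a) (P : Finpartition (Finset.univ : Finset (Fin N))) :
    ∃ Q : Finpartition (Finset.univ : Finset (Fin N)),
      (∀ q ∈ Q.parts, ∃ l u : Fin N, q = Finset.Icc l u) ∧
      Q.parts.val.map Finset.card = P.parts.val.map Finset.card ∧
      waitingCost a Q ≤ waitingCost a P := by
  refine ⟨P.consecutiveBlocks, ?_, P.map_card_consecutiveBlocks_parts,
    P.waitingCost_consecutiveBlocks_le ha⟩
  intro q hq
  obtain ⟨p, hp, rfl⟩ := mem_image.mp hq
  exact P.exists_block_eq_Icc hp
end
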